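/- Let L: ℝ^d → ℝ be convex and twice continuously differentiable, λ > 0, and suppose θ̂ minimizes θ ↦ L(θ) + λ‖θ‖₁ with the restriction of the Hessian ∇²L to indices in S being strictly positive definite at every point, and suppose there is an optimal dual ẑ (subgradient of ‖θ̂‖₁ with ∇L(θ̂) + λẑ = 0) satisfying ‖ẑ_{S^c}‖_∞ < 1. Then θ̂ is the unique minimizer of θ ↦ L(θ) + λ‖θ‖₁. -/

import Mathlib

/-!
The optimal dual `ẑ` is a certificate for every minimizer `θ`: first-order convexity of `L` at
`θ̂` together with `∇L(θ̂) = -λẑ` and `⟨ẑ, θ̂⟩ = ‖θ̂‖₁` give `‖θ‖₁ ≤ ⟨ẑ, θ⟩`, and since `|ẑⱼ| ≤ 1`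
this forces `θⱼ = 0` wherever `|ẑⱼ| < 1`. Hence any two minimizers differ by a vector supported
in `S`, along which the Hessian is positive definite, so the objective is strictly convex on the
segment joining them, and a strictly convex function has at most one minimizer.
-/

open Set AffineMap
open scoped RealInnerProductSpace

theorem Real.sign_mul_self_eq_abs (r : ℝ) : Real.sign r * r = |r| := by
  rcases lt_trichotomy r 0 with hr | rfl | hr
  · rw [Real.sign_of_neg hr, abs_of_neg hr, neg_one_mul]
  · simp
  · rw [Real.sign_of_pos hr, abs_of_pos hr, one_mul]

section DualCertificate

variable {ι : Type*} [Fintype ι] {x z : ι → ℝ}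

theorem sum_mul_eq_sum_abs_of_eq_sign (hz : ∀ i, x i ≠ 0 → z i = Real.sign (x i)) :
    ∑ i, z i * x i = ∑ i, |x i| := by
  refine Finset.sum_congr rfl fun i _ => ?_
  by_cases hx : x i = 0
  · simp [hx]
  · rw [hz i hx, Real.sign_mul_self_eq_abs]

theorem eq_zero_of_sum_abs_le_sum_mul (hz : ∀ i, |z i| ≤ 1)
    (h : ∑ i, |x i| ≤ ∑ i, z i * x i) {j : ι} (hj : |z j| < 1) : x j = 0 := by
  by_contra hx
  have hle : ∀ i ∈ Finset.univ, z i * x i ≤ |x i| := fun i _ =>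
    calc z i * x i ≤ |z i| * |x i| := abs_mul (z i) (x i) ▸ le_abs_self _
      _ ≤ |x i| := mul_le_of_le_one_left (abs_nonneg _) (hz i)
  have hlt : z j * x j < |x j| :=
    calc z j * x j ≤ |z j| * |x j| := abs_mul (z j) (x j) ▸ le_abs_self _
      _ < |x j| := mul_lt_of_lt_one_left (abs_pos.mpr hx) hj
  exact (Finset.sum_lt_sum hle ⟨j, Finset.mem_univ j, hlt⟩).not_ge h

end DualCertificate

theorem convexOn_sum_abs {ι : Type*} [Fintype ι] :
    ConvexOn ℝ univ (fun x : EuclideanSpace ℝ ι => ∑ i, |x i|) := by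
  refine ⟨convex_univ, fun x _ y _ a b ha hb _ => ?_⟩
  simp only [PiLp.add_apply, PiLp.smul_apply, smul_eq_mul, Finset.mul_sum,
    ← Finset.sum_add_distrib]
  refine Finset.sum_le_sum fun i _ => (abs_add_le _ _).trans_eq ?_
  rw [abs_mul, abs_mul, abs_of_nonneg ha, abs_of_nonneg hb]

section Calculus

variable {E : Type*} [NormedAddCommGroup E] [NormedSpace ℝ E] {f : E → ℝ}

theorem ConvexOn.add_fderiv_sub_le (hf : ConvexOn ℝ univ f) {x : E} {f' : E →L[ℝ] ℝ}
    (hx : HasFDerivAt f f' x) (y : E) : f x + f' (y - x) ≤ f y := by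
  have hline : HasDerivAt (f ∘ lineMap (k := ℝ) x y) (f' (y - x)) 0 :=
    (lineMap_apply_zero (k := ℝ) x y ▸ hx).comp_hasDerivAt 0 hasDerivAt_lineMap
  have hslope := (hf.comp_affineMap (lineMap x y)).le_slope_of_hasDerivAt
    (mem_univ 0) (mem_univ 1) one_pos hline
  simp only [slope_def_field, Function.comp_apply, lineMap_apply_zero, lineMap_apply_one,
    sub_zero, div_one] at hslope
  linarith

theorem deriv_comp_lineMap (hf : Differentiable ℝ f) (a b : E) :
    deriv (f ∘ lineMap (k := ℝ) a b) = fun t : ℝ => fderiv ℝ f (lineMap a b t) (b - a) :=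
  funext fun t => ((hf _).hasFDerivAt.comp_hasDerivAt t hasDerivAt_lineMap).deriv

theorem deriv2_comp_lineMap (hf : ContDiff ℝ 2 f) (a b : E) (t : ℝ) :
    deriv^[2] (f ∘ lineMap (k := ℝ) a b) t =
      iteratedFDeriv ℝ 2 f (lineMap a b t) ![b - a, b - a] := by
  have hf' : Differentiable ℝ (fderiv ℝ f) :=
    (hf.fderiv_right (m := 1) le_rfl).differentiable one_ne_zero
  have hderiv : HasDerivAt (fun s : ℝ => fderiv ℝ f (lineMap a b s))
      (fderiv ℝ (fderiv ℝ f) (lineMap a b t) (b - a)) t :=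
    (hf' _).hasFDerivAt.comp_hasDerivAt t hasDerivAt_lineMap
  rw [Function.iterate_succ_apply, Function.iterate_one,
    deriv_comp_lineMap (hf.differentiable two_ne_zero) a b,
    (hderiv.clm_apply (hasDerivAt_const t (b - a))).deriv, iteratedFDeriv_two_apply]
  simp

theorem strictConvexOn_comp_lineMap_of_iteratedFDeriv_pos (hf : ContDiff ℝ 2 f) (a b : E)
    (hpos : ∀ t : ℝ, 0 < iteratedFDeriv ℝ 2 f (lineMap a b t) ![b - a, b - a]) :
    StrictConvexOn ℝ univ (f ∘ lineMap (k := ℝ) a b) :=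
  strictConvexOn_univ_of_deriv2_pos (hf.continuous.comp (lineMap_continuous (R := ℝ)))
    fun t => deriv2_comp_lineMap hf a b t ▸ hpos t

end Calculus

theorem EuclideanSpace.inner_eq_sum_mul {ι : Type*} [Fintype ι] (x y : EuclideanSpace ℝ ι) :
    ⟪x, y⟫ = ∑ i, x i * y i := by
  simp [PiLp.inner_apply, mul_comm]

theorem sum_abs_le_sum_mul_of_objective_le {ι : Type*} [Fintype ι]
    {L : EuclideanSpace ℝ ι → ℝ} (hconv : ConvexOn ℝ univ L) {lam : ℝ} (hlam : 0 < lam)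
    {θhat zhat θ : EuclideanSpace ℝ ι} (hdiff : DifferentiableAt ℝ L θhat)
    (hgrad : gradient L θhat + lam • zhat = 0)
    (hsub : ∀ j, θhat j ≠ 0 → zhat j = Real.sign (θhat j))
    (hθ : L θ + lam * ∑ i, |θ i| ≤ L θhat + lam * ∑ i, |θhat i|) :
    ∑ i, |θ i| ≤ ∑ i, zhat i * θ i := by
  have hfirst := hconv.add_fderiv_sub_le hdiff.hasGradientAt.hasFDerivAt θ
  rw [InnerProductSpace.toDual_apply_apply, eq_neg_of_add_eq_zero_left hgrad, inner_neg_left,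
    real_inner_smul_left, inner_sub_right, EuclideanSpace.inner_eq_sum_mul,
    EuclideanSpace.inner_eq_sum_mul, sum_mul_eq_sum_abs_of_eq_sign hsub] at hfirst
  refine le_of_mul_le_mul_left ?_ hlam
  linarith

/-- Uniqueness of the L1-regularized minimizer: if `θ̂` minimizes `L(θ) + λ‖θ‖₁` with a
dual `ẑ` satisfying `‖ẑ_{Sᶜ}‖_∞ < 1`, and the Hessian of `L` restricted to directions
supported on `S` is strictly positive definite at every point, then `θ̂` is the unique
minimizer. -/
theorem stmt19 (d : ℕ) (L : EuclideanSpace ℝ (Fin d) → ℝ)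
    (hconv : ConvexOn ℝ Set.univ L) (hsmooth : ContDiff ℝ 2 L)
    (lam : ℝ) (hlam : 0 < lam) (S : Finset (Fin d))
    (θhat zhat : EuclideanSpace ℝ (Fin d))
    (hmin : ∀ θ, L θhat + lam * ∑ i, |θhat i| ≤ L θ + lam * ∑ i, |θ i|)
    (hgrad : gradient L θhat + lam • zhat = 0)
    (hsub1 : ∀ j, θhat j ≠ 0 → zhat j = Real.sign (θhat j))
    (hsub2 : ∀ j, |zhat j| ≤ 1)
    (hstrict : ∀ j ∉ S, |zhat j| < 1)
    (hhess : ∀ θ, ∀ v : EuclideanSpace ℝ (Fin d), v ≠ 0 → (∀ j ∉ S, v j = 0) →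
      0 < iteratedFDeriv ℝ 2 L θ ![v, v]) :
    ∀ θtil : EuclideanSpace ℝ (Fin d),
      (∀ θ, L θtil + lam * ∑ i, |θtil i| ≤ L θ + lam * ∑ i, |θ i|) →
      θtil = θhat := by
  intro θtil hmin'
  have hsupported : ∀ θ : EuclideanSpace ℝ (Fin d),
      L θ + lam * ∑ i, |θ i| ≤ L θhat + lam * ∑ i, |θhat i| → ∀ j ∉ S, θ j = 0 :=
    fun θ hθ j hj => eq_zero_of_sum_abs_le_sum_mul hsub2 (sum_abs_le_sum_mul_of_objective_le
      hconv hlam (hsmooth.differentiable two_ne_zero θhat) hgrad hsub1 hθ) (hstrict j hj)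
  have hsupp : ∀ j ∉ S, (θtil - θhat) j = 0 := fun j hj => by
    rw [PiLp.sub_apply, hsupported θtil (hmin' θhat) j hj, hsupported θhat le_rfl j hj, sub_zero]
  by_contra hne
  have hL_line := strictConvexOn_comp_lineMap_of_iteratedFDeriv_pos hsmooth θhat θtil
    fun t => hhess _ _ (sub_ne_zero.mpr hne) hsupp
  set ψ : ℝ → ℝ := fun t => L (lineMap θhat θtil t) + lam * ∑ i, |lineMap θhat θtil t i|
  have hψ : StrictConvexOn ℝ univ ψ :=
    hL_line.add_convexOn ((convexOn_sum_abs.comp_affineMap (lineMap θhat θtil)).smul hlam.le)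
  have hmin_zero : IsMinOn ψ univ 0 := isMinOn_univ_iff.mpr fun t => by
    simpa only [ψ, lineMap_apply_zero] using hmin (lineMap θhat θtil t)
  have hmin_one : IsMinOn ψ univ 1 := isMinOn_univ_iff.mpr fun t => by
    simpa only [ψ, lineMap_apply_one] using hmin' (lineMap θhat θtil t)
  exact zero_ne_one (hψ.eq_of_isMinOn hmin_zero hmin_one (mem_univ 0) (mem_univ 1))
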